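/- Fix n ≥ 2 and let G=(V,E) be any communication graph with n vertices. In every configuration C reachable from the initial configuration under the protocol CIW_n in which every agent has phase 1, the sum of cnt(C(a)) over all agents a ∈ V equals n. -/
import Mathlib


/-!
Population protocols: framework and the protocol `CIW_n`.

STATEMENT 7: In every configuration `C` reachable from the initial configuration
under the protocol `CIW_n` on a communication graph with `n` vertices, the sum of
`cnt` over all agents whose phase is 3 or 4 equals the number of such agents.
-/

namespace CGI

attribute [local instance] Classical.propDecidable

noncomputable section

variable {V Q : Type*}

/-- One interaction step: the initiator `e.1` and the responder `e.2` update their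
states according to the transition function `δ`; everyone else is unchanged. -/
def stepFn (δ : Q × Q → Q × Q) (C : V → Q) (e : V × V) : V → Q :=
  fun w =>
    if w = e.1 then (δ (C e.1, C e.2)).1
    else if w = e.2 then (δ (C e.1, C e.2)).2
    else C w

/-- Reachability between configurations by finitely many steps over arcs of `E`. -/
def Reach (δ : Q × Q → Q × Q) (E : V × V → Prop) (C C' : V → Q) : Prop :=
  Relation.ReflTransGen (fun D D' => ∃ e, E e ∧ D' = stepFn δ D e) C C'

/-- A communication graph: no self-loops and weak connectivity. -/
def IsCommGraph (E : V × V → Prop) : Prop :=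
  (∀ v : V, ¬ E (v, v)) ∧
  ∀ u w : V, Relation.ReflTransGen (fun a b => E (a, b) ∨ E (b, a)) u w

/-- States of the protocol `CIW_n`. -/
structure StW where
  leader : Bool  -- `true` = L, `false` = F
  phase : ℕ
  mode : Bool    -- `false` = 0, `true` = 1
  cnt : ℕ
  deriving DecidableEq

/-- The initial state `(L,1,0,1)` of `CIW_n`. -/
def initW : StW := ⟨true, 1, false, 1⟩

/-- The transition rules (R1)–(R5) of `CIW_n` for initiator `a` and responder `b`;
additions to `cnt` are truncated at `n`. -/
def ciwPair (n : ℕ) (a b : StW) : StW × StW :=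
  if a.leader = true ∧ b.leader = true then
    -- (R1)
    let c := min n (a.cnt + b.cnt)
    if c = n then (⟨true, 2, a.mode, 0⟩, ⟨false, b.phase, b.mode, 0⟩)
    else (⟨true, a.phase, a.mode, c⟩, ⟨false, b.phase, b.mode, 0⟩)
  else if a.leader = true ∧ a.phase = 2 ∧ a.mode = b.mode then
    -- (R2)
    let c := min n (a.cnt + 1)
    if c = n - 1 then (⟨true, 3, !a.mode, 1⟩, ⟨b.leader, b.phase, !b.mode, b.cnt⟩)
    else (⟨true, a.phase, a.mode, c⟩, ⟨b.leader, b.phase, !b.mode, b.cnt⟩)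
  else if a.leader = true ∧ a.phase = 3 ∧ b.phase = 1 then
    -- (R3)
    (⟨false, a.phase, a.mode, a.cnt⟩, ⟨true, 2, b.mode, b.cnt⟩)
  else if a.phase = 3 ∧ b.phase = 3 ∧ 0 < a.cnt ∧ 0 < b.cnt then
    -- (R4)
    let c := min n (a.cnt + b.cnt)
    if c = n then (⟨a.leader, 4, a.mode, c⟩, ⟨b.leader, b.phase, b.mode, 0⟩)
    else (⟨a.leader, a.phase, a.mode, c⟩, ⟨b.leader, b.phase, b.mode, 0⟩)
  else if a.phase = 4 then
    -- (R5)
    (a, ⟨b.leader, 4, b.mode, b.cnt⟩)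
  else (a, b)

/-- The transition function of `CIW_n`. -/
def ciwδ (n : ℕ) : StW × StW → StW × StW := fun p => ciwPair n p.1 p.2

lemma sum_split {V : Type} [Fintype V] (u v : V) (huv : u ≠ v) (f : V → ℕ) :
    (∑ a : V, f a) = f u + f v + ∑ a ∈ (Finset.univ.erase u).erase v, f a := by
  rw [← Finset.add_sum_erase _ f (Finset.mem_univ u),
      ← Finset.add_sum_erase _ f (Finset.mem_erase.mpr ⟨Ne.symm huv, Finset.mem_univ v⟩)]
  ring

lemma ciw_phase1_pre (n : ℕ) (a b : StW)
    (h1 : (ciwPair n a b).1.phase = 1) (h2 : (ciwPair n a b).2.phase = 1) :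
    a.phase = 1 ∧ b.phase = 1 := by
  unfold ciwPair at h1 h2
  dsimp only at h1 h2
  split_ifs at h1 h2 <;> simp_all <;> omega

lemma ciw_cnt (n : ℕ) (a b : StW)
    (h1 : (ciwPair n a b).1.phase = 1) (h2 : (ciwPair n a b).2.phase = 1)
    (hle : a.cnt + b.cnt ≤ n) :
    (ciwPair n a b).1.cnt + (ciwPair n a b).2.cnt = a.cnt + b.cnt := by
  unfold ciwPair at h1 h2 ⊢
  dsimp only at h1 h2 ⊢
  split_ifs at h1 h2 ⊢ <;> simp_all <;> omega

theorem statement8 (n : ℕ) (hn : 2 ≤ n) (V : Type) [Fintype V]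
    (hV : Fintype.card V = n) (E : V × V → Prop) (hG : IsCommGraph E) :
    ∀ C : V → StW, Reach (ciwδ n) E (fun _ => initW) C →
      (∀ a : V, (C a).phase = 1) → (∑ a : V, (C a).cnt) = n := by
  intro C hreach
  induction hreach with
  | refl =>
    intro _
    simp only [initW]
    simpa using hV
  | tail hR hstep ih =>
    rename_i B C
    obtain ⟨e, hE, rfl⟩ := hstep
    intro hph
    have hne : e.1 ≠ e.2 := by
      intro h
      apply hG.1 e.1
      have he : (e.1, e.1) = e := by rw [Prod.ext_iff]; exact ⟨rfl, h⟩
      rw [he]; exact hE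
    have h1 : (ciwPair n (B e.1) (B e.2)).1.phase = 1 := by
      have := hph e.1
      simpa [stepFn, ciwδ] using this
    have h2 : (ciwPair n (B e.1) (B e.2)).2.phase = 1 := by
      have := hph e.2
      simpa [stepFn, ciwδ, hne, Ne.symm hne] using this
    have hpre := ciw_phase1_pre n (B e.1) (B e.2) h1 h2
    have hBph : ∀ a : V, (B a).phase = 1 := by
      intro a
      by_cases ha1 : a = e.1
      · rw [ha1]; exact hpre.1
      by_cases ha2 : a = e.2
      · rw [ha2]; exact hpre.2
      · have := hph a
        simpa [stepFn, ha1, ha2] using this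
    have hsumB : (∑ a : V, (B a).cnt) = n := ih hBph
    have hrest : ∀ a ∈ (Finset.univ.erase e.1).erase e.2,
        (stepFn (ciwδ n) B e a).cnt = (B a).cnt := by
      intro a ha
      simp only [Finset.mem_erase] at ha
      simp [stepFn, ha.1, ha.2.1]
    rw [sum_split e.1 e.2 hne] at hsumB ⊢
    rw [Finset.sum_congr rfl hrest]
    have hle : (B e.1).cnt + (B e.2).cnt ≤ n := by omega
    have hcnt := ciw_cnt n (B e.1) (B e.2) h1 h2 hle
    have hu : (stepFn (ciwδ n) B e e.1).cnt = (ciwPair n (B e.1) (B e.2)).1.cnt := by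
      simp [stepFn, ciwδ]
    have hv : (stepFn (ciwδ n) B e e.2).cnt = (ciwPair n (B e.1) (B e.2)).2.cnt := by
      simp [stepFn, ciwδ, hne, Ne.symm hne]
    rw [hu, hv]
    omega


end

end CGI
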